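/- arXiv:math/0601608 — 3 statements merged into one kernel-verified Lean document; each statement's English description precedes it below -/
import Mathlib

section
/- Let 0 < α < 1, let m ≥ 1 be an integer, let ν > 0 and let u > 0 satisfy ν u^{−α} < 1. Then the series ∑_{l=0}^∞ (Γ(m+lα)/Γ(1+lα)) (−ν u^{−α})^l converges absolutely and ∫₀^∞ s^{m−1} e^{−us} E_α(−ν s^α) ds = u^{−m} ∑_{l=0}^∞ (Γ(m+lα)/Γ(1+lα)) (−ν u^{−α})^l. -/
/-!
Expanding `E_α` termwise, the `l`-th term integrates against `s^(m-1) e^{-us}` to the Gamma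
integral `Γ(m+lα) u^{-(m+lα)}` times `c^l / Γ(1+lα)`. Sum and integral may be interchanged
because the integrals of the absolute values are the same expressions with `|c|` for `c`, and
these are summable: for `α ≤ 1`, `Γ(m+lα)/Γ(1+lα) ≤ Γ(m+l)/Γ(1+l) = (l+m-1)!/l!` is
polynomial in `l`, while `(|c| u^{-α})^l` decays geometrically.
-/

open MeasureTheory Real Set

/-- The Mittag-Leffler function `E_α(x) = ∑_{k=0}^∞ x^k / Γ(1+kα)`. -/
noncomputable def mittagLeffler (α x : ℝ) : ℝ := ∑' k : ℕ, x ^ k / Real.Gamma (1 + k * α)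

namespace Real

theorem Gamma_add_nat_div_Gamma_le {x y : ℝ} (hx : 0 < x) (hxy : x ≤ y) (n : ℕ) :
    Gamma (x + n) / Gamma x ≤ Gamma (y + n) / Gamma y := by
  have hy : 0 < y := hx.trans_le hxy
  induction n with
  | zero => simp [div_self (Gamma_pos_of_pos hx).ne', div_self (Gamma_pos_of_pos hy).ne']
  | succ n ih =>
    have hx' : 0 < x + n := by positivity
    have hy' : 0 < y + n := by positivity
    simp only [Nat.cast_succ, ← add_assoc, Gamma_add_one hx'.ne', Gamma_add_one hy'.ne',
      mul_div_assoc]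
    exact mul_le_mul (by linarith) ih (div_pos (Gamma_pos_of_pos hx') (Gamma_pos_of_pos hx)).le
      hy'.le

theorem Gamma_natCast_add_one_add_nat_div (l k : ℕ) :
    Gamma ((l : ℝ) + 1 + k) / Gamma ((l : ℝ) + 1) = (l + k).descFactorial k := by
  have hfac := Nat.factorial_mul_descFactorial (Nat.le_add_left k l)
  rw [Nat.add_sub_cancel] at hfac
  rw [add_right_comm, ← Nat.cast_add, Gamma_nat_eq_factorial, Gamma_nat_eq_factorial, ← hfac,
    Nat.cast_mul, mul_div_cancel_left₀ _ (by positivity)]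

end Real

theorem summable_Gamma_add_mul_div_Gamma_mul_geometric {α r : ℝ} (hα0 : 0 ≤ α)
    (hα1 : α ≤ 1) {m : ℕ} (hm : 1 ≤ m) (hr0 : 0 ≤ r) (hr1 : r < 1) :
    Summable fun l : ℕ => Gamma ((m : ℝ) + l * α) / Gamma (1 + l * α) * r ^ l := by
  obtain ⟨k, rfl⟩ := Nat.exists_eq_add_of_le' hm
  have hratio (l : ℕ) : Gamma ((↑(k + 1) : ℝ) + l * α) / Gamma (1 + l * α)
      ≤ (l + k).descFactorial k := by
    rw [← Real.Gamma_natCast_add_one_add_nat_div, add_comm (l : ℝ) 1]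
    have hlα : (l : ℝ) * α ≤ l := mul_le_of_le_one_right (Nat.cast_nonneg l) hα1
    convert Real.Gamma_add_nat_div_Gamma_le (x := 1 + l * α) (y := 1 + l) (by positivity)
      (by linarith) k using 3
    push_cast; ring
  have hr : ‖r‖ < 1 := by rwa [Real.norm_of_nonneg hr0]
  refine (summable_descFactorial_mul_geometric_of_norm_lt_one k hr).of_nonneg_of_le
    (fun l => by positivity) fun l => ?_
  exact mul_le_mul_of_nonneg_right (hratio l) (pow_nonneg hr0 l)

section LaplaceTransform

variable {α u : ℝ} {m : ℕ}

theorem pow_mul_exp_neg_mul_mul_rpow_pow (hm : 1 ≤ m) {s : ℝ} (hs : 0 < s) (c : ℝ) (l : ℕ) :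
    s ^ (m - 1) * exp (-u * s) * (c * s ^ α) ^ l
      = c ^ l * (s ^ ((m : ℝ) + l * α - 1) * exp (-(u * s))) := by
  rw [mul_pow, ← rpow_natCast (s ^ α), ← rpow_mul hs.le, ← rpow_natCast s (m - 1),
    Nat.cast_sub hm, Nat.cast_one, show (m : ℝ) + l * α - 1 = (m - 1) + α * l by ring,
    rpow_add hs, neg_mul]
  ring

theorem integrableOn_pow_mul_exp_neg_mul_mul_rpow_pow (hα : 0 ≤ α) (hm : 1 ≤ m) (hu : 0 < u)
    (c : ℝ) (l : ℕ) :
    IntegrableOn (fun s => s ^ (m - 1) * exp (-u * s) * (c * s ^ α) ^ l) (Ioi 0) := by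
  have hexp : -1 < (m : ℝ) + l * α - 1 := by
    have : (1 : ℝ) ≤ m := by exact_mod_cast hm
    nlinarith [(Nat.cast_nonneg l : (0 : ℝ) ≤ l)]
  refine IntegrableOn.congr_fun
    ((integrableOn_rpow_mul_exp_neg_mul_rpow hexp one_pos hu).const_mul (c ^ l))
    (fun s hs => ?_) measurableSet_Ioi
  rw [pow_mul_exp_neg_mul_mul_rpow_pow hm hs, rpow_one, neg_mul]

theorem integral_pow_mul_exp_neg_mul_mul_rpow_pow (hα : 0 ≤ α) (hm : 1 ≤ m) (hu : 0 < u)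
    (c : ℝ) (l : ℕ) :
    ∫ s in Ioi 0, s ^ (m - 1) * exp (-u * s) * (c * s ^ α) ^ l
      = Gamma (m + l * α) * u ^ (-(m : ℝ)) * (c * u ^ (-α)) ^ l := by
  have hpos : 0 < (m : ℝ) + l * α := by
    have : (1 : ℝ) ≤ m := by exact_mod_cast hm
    positivity
  rw [setIntegral_congr_fun measurableSet_Ioi fun s hs =>
      pow_mul_exp_neg_mul_mul_rpow_pow hm hs c l,
    integral_const_mul, integral_rpow_mul_exp_neg_mul_Ioi hpos hu, one_div, ← rpow_neg_one,
    ← rpow_mul hu.le, mul_pow, ← rpow_natCast (u ^ (-α)), ← rpow_mul hu.le, neg_one_mul,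
    neg_add, rpow_add hu]
  ring_nf

end LaplaceTransform

section MittagLeffler

variable {α u c : ℝ} {m : ℕ}

theorem summable_abs_Gamma_add_mul_div_Gamma_mul_pow (hα0 : 0 ≤ α) (hα1 : α ≤ 1)
    (hm : 1 ≤ m) (hu : 0 < u) (hc : |c| * u ^ (-α) < 1) :
    Summable fun l : ℕ =>
      |Gamma ((m : ℝ) + l * α) / Gamma (1 + l * α) * (c * u ^ (-α)) ^ l| := by
  refine (summable_Gamma_add_mul_div_Gamma_mul_geometric hα0 hα1 hm (by positivity) hc).congr
    fun l => ?_
  rw [abs_mul, abs_pow, abs_mul, abs_of_pos (rpow_pos_of_pos hu _),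
    abs_of_pos (div_pos (Gamma_pos_of_pos (by positivity)) (Gamma_pos_of_pos (by positivity)))]

theorem integral_pow_mul_exp_neg_mul_mittagLeffler (hα0 : 0 ≤ α) (hα1 : α ≤ 1)
    (hm : 1 ≤ m) (hu : 0 < u) (hc : |c| * u ^ (-α) < 1) :
    ∫ s in Ioi 0, s ^ (m - 1) * exp (-u * s) * mittagLeffler α (c * s ^ α)
      = u ^ (-(m : ℝ)) *
          ∑' l : ℕ, Gamma (m + l * α) / Gamma (1 + l * α) * (c * u ^ (-α)) ^ l := by
  have hΓ (l : ℕ) : 0 < Gamma (1 + l * α) := Gamma_pos_of_pos (by positivity)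
  set F : ℕ → ℝ → ℝ := fun l s =>
    s ^ (m - 1) * exp (-u * s) * (c * s ^ α) ^ l / Gamma (1 + l * α)
  have hF_int (l : ℕ) : IntegrableOn (F l) (Ioi 0) :=
    (integrableOn_pow_mul_exp_neg_mul_mul_rpow_pow hα0 hm hu c l).div_const _
  have hF_integral (c' : ℝ) (l : ℕ) :
      ∫ s in Ioi 0, s ^ (m - 1) * exp (-u * s) * (c' * s ^ α) ^ l / Gamma (1 + l * α)
        = u ^ (-(m : ℝ)) * (Gamma (m + l * α) / Gamma (1 + l * α) * (c' * u ^ (-α)) ^ l) := by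
    rw [integral_div, integral_pow_mul_exp_neg_mul_mul_rpow_pow hα0 hm hu]
    ring
  have hF_norm (l : ℕ) : ∫ s in Ioi 0, ‖F l s‖
      = u ^ (-(m : ℝ)) * (Gamma (m + l * α) / Gamma (1 + l * α) * (|c| * u ^ (-α)) ^ l) := by
    rw [← hF_integral]
    refine setIntegral_congr_fun measurableSet_Ioi fun s (hs : 0 < s) => ?_
    simp only [F, norm_div, norm_mul, norm_pow, Real.norm_eq_abs, abs_of_pos hs,
      abs_of_pos (exp_pos _), abs_of_pos (rpow_pos_of_pos hs α), abs_of_pos (hΓ l)]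
  have hsummable : Summable fun l => ∫ s in Ioi 0, ‖F l s‖ := by
    simp only [hF_norm]
    exact (summable_Gamma_add_mul_div_Gamma_mul_geometric hα0 hα1 hm (by positivity)
      hc).mul_left _
  calc ∫ s in Ioi 0, s ^ (m - 1) * exp (-u * s) * mittagLeffler α (c * s ^ α)
      = ∫ s in Ioi 0, ∑' l, F l s := by
        simp only [F, mittagLeffler, ← tsum_mul_left, mul_div_assoc]
    _ = ∑' l, ∫ s in Ioi 0, F l s :=
        (integral_tsum_of_summable_integral_norm hF_int hsummable).symm
    _ = u ^ (-(m : ℝ)) *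
          ∑' l : ℕ, Gamma (m + l * α) / Gamma (1 + l * α) * (c * u ^ (-α)) ^ l := by
        simp only [F, hF_integral, tsum_mul_left]

end MittagLeffler

/-- Let 0 < α < 1, let m ≥ 1 be an integer, let ν > 0 and let u > 0 satisfy
ν u^{−α} < 1.  Then the series ∑_{l=0}^∞ (Γ(m+lα)/Γ(1+lα)) (−ν u^{−α})^l converges
absolutely and
∫₀^∞ s^{m−1} e^{−us} E_α(−ν s^α) ds = u^{−m} ∑_{l=0}^∞ (Γ(m+lα)/Γ(1+lα)) (−ν u^{−α})^l. -/
theorem stmt4 (α : ℝ) (h0 : 0 < α) (h1 : α < 1) (m : ℕ) (hm : 1 ≤ m)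
    (ν u : ℝ) (hν : 0 < ν) (hu : 0 < u) (hlt : ν * u ^ (-α) < 1) :
    Summable (fun l : ℕ =>
      |Real.Gamma ((m : ℝ) + l * α) / Real.Gamma (1 + l * α) * (-(ν * u ^ (-α))) ^ l|) ∧
    ∫ s in Ioi (0:ℝ), s ^ (m - 1) * Real.exp (-u * s) * mittagLeffler α (-ν * s ^ α)
      = u ^ (-(m : ℝ)) *
          ∑' l : ℕ, Real.Gamma ((m : ℝ) + l * α) / Real.Gamma (1 + l * α)
            * (-(ν * u ^ (-α))) ^ l := by
  have hc : |-ν| * u ^ (-α) < 1 := by rwa [abs_neg, abs_of_pos hν]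
  simp only [← neg_mul]
  exact ⟨summable_abs_Gamma_add_mul_div_Gamma_mul_pow h0.le h1.le hm hu hc,
    integral_pow_mul_exp_neg_mul_mittagLeffler h0.le h1.le hm hu hc⟩
end

section
/- For every q ≥ 0, E_{1/2}(−q) = ∫₀^∞ e^{−q t^{−1/2}} f_{1/2}(t) dt, where E_{1/2}(x) = ∑_{k=0}^∞ x^k / Γ(1+k/2) and f_{1/2}(t) = (2√π)^{−1} t^{−3/2} e^{−1/(4t)} for t > 0. -/
open MeasureTheory Real Set

/-- The density `f_{1/2}(t) = (2√π)^{−1} t^{−3/2} e^{−1/(4t)}` of the positive stable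
law of index 1/2. -/
noncomputable def stableHalf (t : ℝ) : ℝ :=
  (2 * Real.sqrt π)⁻¹ * t ^ (-(3 / 2) : ℝ) * Real.exp (-1 / (4 * t))

/-!
The substitution `t = x⁻²` carries `f_{1/2}(t) dt` to the half-normal density
`π^{-1/2} e^{-x²/4} dx` on `(0, ∞)`, so the right-hand side is
`π^{-1/2} ∫₀^∞ e^{-qx} e^{-x²/4} dx`. Since `e^{|q|x - x²/4}` is integrable, `e^{-qx}` may be
expanded in its power series and integrated term by term. The half-normal moments are
`∫₀^∞ x^k e^{-x²/4} dx = 2^k Γ((k+1)/2)`, and Legendre's duplication formula rewrites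
`2^k Γ((k+1)/2)` as `√π k! / Γ(1 + k/2)`.
-/

open scoped Nat

theorem integral_exp_mul_mul_eq_tsum {α : Type*} [MeasurableSpace α] {μ : Measure α}
    {X w : α → ℝ} (hX : AEStronglyMeasurable X μ) (hw : AEStronglyMeasurable w μ) (c : ℝ)
    (hint : Integrable (fun a => exp (|c| * |X a|) * w a) μ) :
    ∫ a, exp (c * X a) * w a ∂μ = ∑' n : ℕ, c ^ n / n ! * ∫ a, X a ^ n * w a ∂μ := by
  set f : ℕ → α → ℝ := fun n a => (c * X a) ^ n / n ! * w a
  have hexp (y : ℝ) : HasSum (fun n : ℕ => y ^ n / n !) (exp y) := by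
    rw [Real.exp_eq_exp_ℝ]
    exact NormedSpace.expSeries_div_hasSum_exp y
  have hf (n : ℕ) : AEStronglyMeasurable (f n) μ := by fun_prop
  have hnorm (a : α) : HasSum (fun n => ‖f n a‖) ‖exp (|c| * |X a|) * w a‖ := by
    simp only [f, norm_mul, norm_div, norm_pow, Real.norm_eq_abs, abs_exp, ← abs_mul,
      Nat.abs_cast]
    exact (hexp _).mul_right _
  have hsum : ∑' n, ∫⁻ a, ‖f n a‖ₑ ∂μ ≠ ⊤ := by
    have htsum (a : α) : ∑' n, ‖f n a‖ₑ = ‖exp (|c| * |X a|) * w a‖ₑ := by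
      simp_rw [← ofReal_norm]
      rw [← ENNReal.ofReal_tsum_of_nonneg (fun _ => norm_nonneg _) (hnorm a).summable,
        (hnorm a).tsum_eq]
    rw [← lintegral_tsum fun n => (hf n).enorm]
    simp_rw [htsum]
    exact hint.hasFiniteIntegral.ne
  calc ∫ a, exp (c * X a) * w a ∂μ = ∫ a, ∑' n, f n a ∂μ := by
        congr with a
        exact ((hexp _).mul_right (w a)).tsum_eq.symm
    _ = ∑' n, ∫ a, f n a ∂μ := integral_tsum hf hsum
    _ = ∑' n : ℕ, c ^ n / n ! * ∫ a, X a ^ n * w a ∂μ := by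
        congr with n
        rw [← integral_const_mul]
        congr with a
        simp only [f, mul_pow]
        ring

theorem integrable_exp_mul_mul_exp_neg_mul_sq {b : ℝ} (hb : 0 < b) (c : ℝ) :
    Integrable (fun x : ℝ => exp (c * x) * exp (-b * x ^ 2)) := by
  refine (integrable_cexp_quadratic (b := b) (by simpa) c 0).norm.congr (.of_forall fun x => ?_)
  simp [Complex.norm_exp, ← Real.exp_add, ← Complex.ofReal_pow, Complex.ofReal_re]
  ring

theorem integral_comp_rpow_neg_half_mul_stableHalf (g : ℝ → ℝ) :
    ∫ t in Ioi 0, g (t ^ (-(1 / 2) : ℝ)) * stableHalf t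
      = (√π)⁻¹ * ∫ x in Ioi 0, g x * exp (-(1 / 4) * x ^ 2) := by
  rw [← integral_comp_rpow_Ioi _ (p := -2) (by norm_num), ← integral_const_mul]
  refine setIntegral_congr_fun measurableSet_Ioi fun x (hx : 0 < x) => ?_
  have hroot : (x ^ (-2 : ℝ)) ^ (-(1 / 2) : ℝ) = x := by
    rw [← rpow_mul hx.le]
    norm_num
  have hdensity :
      stableHalf (x ^ (-2 : ℝ)) = (2 * √π)⁻¹ * x ^ (3 : ℝ) * exp (-(1 / 4) * x ^ 2) := by
    have hexponent : -1 / (4 * (x ^ 2)⁻¹) = -(1 / 4) * x ^ 2 := by field_simp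
    rw [stableHalf, ← rpow_mul hx.le, rpow_neg hx.le, rpow_two, hexponent]
    norm_num
  have hjacobian : x ^ (-2 - 1 : ℝ) * x ^ (3 : ℝ) = 1 := by
    rw [← rpow_add hx]
    norm_num
  rw [hroot, hdensity, smul_eq_mul, abs_neg, abs_two]
  linear_combination (√π)⁻¹ * g x * exp (-(1 / 4) * x ^ 2) * hjacobian

theorem integral_rpow_mul_exp_neg_quarter_mul_sq {s : ℝ} (hs : -1 < s) :
    ∫ x in Ioi 0, x ^ s * exp (-(1 / 4) * x ^ (2 : ℝ))
      = √π * Gamma (s + 1) / Gamma (s / 2 + 1) := by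
  rw [integral_rpow_mul_exp_neg_mul_rpow two_pos hs (by norm_num)]
  have hdup := Gamma_mul_Gamma_add_half ((s + 1) / 2)
  rw [show (s + 1) / 2 + 1 / 2 = s / 2 + 1 by ring, show 2 * ((s + 1) / 2) = s + 1 by ring,
    show 1 - (s + 1) = -s by ring, rpow_neg zero_le_two] at hdup
  have hpow : (1 / 4 : ℝ) ^ (-(s + 1) / 2) = 2 * 2 ^ s := by
    rw [show (1 / 4 : ℝ) = 2 ^ (-2 : ℝ) by norm_num [rpow_neg], ← rpow_mul zero_le_two,
      show -2 * (-(s + 1) / 2) = s + 1 by ring, rpow_add two_pos, rpow_one, mul_comm]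
  have hΓ : Gamma (s / 2 + 1) ≠ 0 := (Gamma_pos_of_pos (by linarith)).ne'
  have h2 : (2 : ℝ) ^ s ≠ 0 := by positivity
  rw [hpow, eq_div_iff hΓ]
  field_simp at hdup ⊢
  linear_combination hdup

theorem stmt7_general (q : ℝ) :
    mittagLeffler (1 / 2) (-q)
      = ∫ t in Ioi (0:ℝ), Real.exp (-q * t ^ (-(1 / 2) : ℝ)) * stableHalf t := by
  have hint : Integrable (fun x : ℝ => exp (|-q| * |x|) * exp (-(1 / 4) * x ^ 2))
      (volume.restrict (Ioi 0)) :=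
    (integrable_exp_mul_mul_exp_neg_mul_sq (b := 1 / 4) (by norm_num) |-q|).restrict.congr
      (ae_restrict_of_forall_mem measurableSet_Ioi fun x (hx : 0 < x) => by
        simp only [abs_of_pos hx])
  rw [integral_comp_rpow_neg_half_mul_stableHalf (fun y => exp (-q * y)),
    integral_exp_mul_mul_eq_tsum (X := fun x => x) aestronglyMeasurable_id (by fun_prop) (-q) hint,
    mittagLeffler, ← tsum_mul_left]
  congr 1 with n
  have hmoment := integral_rpow_mul_exp_neg_quarter_mul_sq (s := n)
    (neg_one_lt_zero.trans_le n.cast_nonneg)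
  simp only [rpow_natCast, rpow_two] at hmoment
  have hΓ : Gamma (n / 2 + 1) ≠ 0 := (Gamma_pos_of_pos (by positivity)).ne'
  rw [hmoment, Gamma_nat_eq_factorial, show (1 : ℝ) + n * (1 / 2) = n / 2 + 1 by ring]
  field_simp

/-- For every q ≥ 0, E_{1/2}(−q) = ∫₀^∞ e^{−q t^{−1/2}} f_{1/2}(t) dt. -/
theorem stmt7 (q : ℝ) (hq : 0 ≤ q) :
    mittagLeffler (1 / 2) (-q)
      = ∫ t in Ioi (0:ℝ), Real.exp (-q * t ^ (-(1 / 2) : ℝ)) * stableHalf t :=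
  stmt7_general q
end

section
/- Let n ≥ 1 be an integer and let y > 1. Then ∑_{l=0}^∞ (Γ(n+l/2)/Γ(1+l/2)) (−1/y)^l = ∫₀^∞ ∫₀^∞ s^{n−1} e^{−s − y^{−1} s^{1/2} t^{−1/2}} f_{1/2}(t) dt ds, where f_{1/2}(t) = (2√π)^{−1} t^{−3/2} e^{−1/(4t)} for t > 0, and the series on the left converges absolutely. -/
/-!
Expanding `exp (-c t^{-1/2})` in powers of `c` and integrating term by term against `f_{1/2}`
turns the inner integral into the Mittag-Leffler series `∑ (-c)^l / Γ(l/2 + 1)`, because the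
negative moments of the stable law are `∫ t^{-a} f_{1/2}(t) dt = Γ(2a + 1) / Γ(a + 1)`
(substitute `t = 1/x` and apply the duplication formula). For `c = y⁻¹ s^{1/2}` a second
term-by-term integration, against `s^{n-1} e^{-s}`, produces `Γ(n + l/2)`. Both interchanges
are justified by absolute convergence: `Γ(n + l/2) / Γ(1 + l/2)` grows polynomially in `l`
and `1/y < 1`.
-/

open MeasureTheory Real Set
open scoped Nat

lemma integral_tsum_mul_of_nonneg {α : Type*} [MeasurableSpace α] {μ : Measure α}
    {g : ℕ → α → ℝ} (a : ℕ → ℝ) (hg_nonneg : ∀ l, 0 ≤ᵐ[μ] g l)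
    (hg_int : ∀ l, Integrable (g l) μ) (hsum : Summable fun l => |a l| * ∫ x, g l x ∂μ) :
    ∫ x, ∑' l, a l * g l x ∂μ = ∑' l, a l * ∫ x, g l x ∂μ := by
  have hnorm : ∀ l, ∫ x, ‖a l * g l x‖ ∂μ = |a l| * ∫ x, g l x ∂μ := fun l => by
    rw [← integral_const_mul]
    refine integral_congr_ae ?_
    filter_upwards [hg_nonneg l] with x hx
    rw [norm_mul, Real.norm_eq_abs, Real.norm_of_nonneg hx]
  rw [← integral_tsum_of_summable_integral_norm (fun l => (hg_int l).const_mul (a l))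
    (by simpa only [hnorm] using hsum)]
  simp only [integral_const_mul]

lemma Gamma_mul_factorial_le_Gamma_add_nat {x : ℝ} (hx : 0 ≤ x) (m : ℕ) :
    Gamma (x + 1) * m ! ≤ Gamma (x + 1 + m) := by
  induction m with
  | zero => simp
  | succ m ih =>
    rw [Nat.factorial_succ, Nat.cast_mul, Nat.cast_succ, ← add_assoc,
      Gamma_add_one (by positivity : x + 1 + m ≠ 0)]
    have : (m : ℝ) + 1 ≤ x + 1 + m := by linarith
    calc Gamma (x + 1) * ((m + 1) * m !) = (m + 1) * (Gamma (x + 1) * m !) := by ring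
      _ ≤ (x + 1 + m) * Gamma (x + 1 + m) := by gcongr

lemma Gamma_add_nat_le {x : ℝ} (hx : 0 < x) (m : ℕ) :
    Gamma (x + m) ≤ (x + m) ^ m * Gamma x := by
  induction m with
  | zero => simp
  | succ m ih =>
    rw [Nat.cast_succ, ← add_assoc, Gamma_add_one (by positivity), pow_succ']
    have hG : 0 ≤ Gamma x := (Gamma_pos_of_pos hx).le
    have hm : x + m ≤ x + m + 1 := by linarith
    calc (x + m) * Gamma (x + m) ≤ (x + m) * ((x + m) ^ m * Gamma x) := by gcongr
      _ ≤ (x + m + 1) * ((x + m + 1) ^ m * Gamma x) := by gcongr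
      _ = (x + m + 1) * (x + m + 1) ^ m * Gamma x := by ring

-- Even and odd terms are dominated by the exponential series of `c²`.
lemma summable_pow_div_Gamma_half_add_one {c : ℝ} (hc : 0 ≤ c) :
    Summable fun l : ℕ => c ^ l / Gamma (l / 2 + 1) := by
  have hexp := Real.summable_pow_div_factorial (c ^ 2)
  refine Summable.even_add_odd ?_ ?_
  · refine hexp.congr fun m => ?_
    rw [pow_mul, Nat.cast_mul, Nat.cast_two, mul_div_cancel_left₀ _ two_ne_zero,
      Gamma_nat_eq_factorial]
  · refine Summable.of_nonneg_of_le (fun m => by positivity) (fun m => ?_)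
      (hexp.mul_left (c / Gamma (1 / 2 + 1)))
    have hGamma := Gamma_mul_factorial_le_Gamma_add_nat (x := 1 / 2) (by norm_num) m
    have hm : ((2 * m + 1 : ℕ) : ℝ) / 2 + 1 = 1 / 2 + 1 + m := by push_cast; ring
    rw [hm, pow_succ, pow_mul, div_le_iff₀ (by positivity)]
    calc (c ^ 2) ^ m * c
          = c / Gamma (1 / 2 + 1) * ((c ^ 2) ^ m / m !) * (Gamma (1 / 2 + 1) * m !) := by
          field_simp
      _ ≤ _ := by gcongr

lemma summable_add_pow_mul_geometric (a : ℝ) (k : ℕ) {r : ℝ} (hr : ‖r‖ < 1) :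
    Summable fun l : ℕ => ((l : ℝ) + a) ^ k * r ^ l := by
  simp_rw [add_pow, Finset.sum_mul]
  refine summable_sum fun j _ => ?_
  refine ((summable_pow_mul_geometric_of_norm_lt_one j hr).mul_left
    (a ^ (k - j) * k.choose j)).congr fun l => ?_
  ring

lemma summable_Gamma_div_Gamma_mul_pow {n : ℕ} (hn : 1 ≤ n) {r : ℝ} (hr0 : 0 ≤ r)
    (hr1 : r < 1) :
    Summable fun l : ℕ => Gamma (n + l / 2) / Gamma (1 + l / 2) * r ^ l := by
  refine Summable.of_nonneg_of_le (fun l => by positivity) (fun l => ?_)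
    (summable_add_pow_mul_geometric n (n - 1) (by rwa [Real.norm_of_nonneg hr0]))
  have hpos : 0 < Gamma (1 + l / 2 : ℝ) := by positivity
  have hle := Gamma_add_nat_le (x := 1 + l / 2) (by positivity) (n - 1)
  rw [Nat.cast_sub hn, Nat.cast_one, show (1 + l / 2 : ℝ) + (n - 1) = n + l / 2 by ring] at hle
  refine mul_le_mul_of_nonneg_right ?_ (pow_nonneg hr0 l)
  rw [div_le_iff₀ hpos]
  refine hle.trans (mul_le_mul_of_nonneg_right (pow_le_pow_left₀ (by positivity) ?_ _) hpos.le)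
  linarith [(Nat.cast_nonneg l : (0 : ℝ) ≤ l)]

lemma stableHalf_nonneg {t : ℝ} (ht : 0 ≤ t) : 0 ≤ stableHalf t := by
  unfold stableHalf
  have := Real.rpow_nonneg ht (-(3 / 2))
  positivity

-- The substitution `t = x⁻¹` turns a negative moment of `stableHalf` into a Gamma integral.
lemma stableHalf_moment_integrand_comp_inv (a : ℝ) {x : ℝ} (hx : 0 < x) :
    (|(-1 : ℝ)| * x ^ ((-1 : ℝ) - 1)) •
        ((x ^ (-1 : ℝ)) ^ (-a) * stableHalf (x ^ (-1 : ℝ)))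
      = (2 * √π)⁻¹ * (x ^ (a + 1 / 2 - 1) * exp (-(1 / 4 * x))) := by
  have hx0 : 0 ≤ x := hx.le
  have hexp : -1 / (4 * x ^ (-1 : ℝ)) = -(1 / 4 * x) := by
    rw [rpow_neg_one]
    field_simp
  have hpow : x ^ ((-1 : ℝ) - 1) * x ^ a * x ^ (3 / 2 : ℝ) = x ^ (a + 1 / 2 - 1) := by
    rw [← rpow_add hx, ← rpow_add hx]
    ring_nf
  unfold stableHalf
  rw [smul_eq_mul, hexp, ← rpow_mul hx0, ← rpow_mul hx0, abs_neg, abs_one, one_mul, ← hpow]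
  ring_nf

lemma integrableOn_rpow_neg_mul_stableHalf {a : ℝ} (ha : -(1 / 2) < a) :
    IntegrableOn (fun t => t ^ (-a) * stableHalf t) (Ioi 0) := by
  rw [← integrableOn_Ioi_comp_rpow_iff _ (by norm_num : (-1 : ℝ) ≠ 0)]
  refine IntegrableOn.congr_fun ?_
    (fun x hx => (stableHalf_moment_integrand_comp_inv a hx).symm) measurableSet_Ioi
  have hGamma := integrableOn_rpow_mul_exp_neg_mul_rpow (p := 1)
    (by linarith : -1 < a + 1 / 2 - 1) one_pos (by norm_num : (0 : ℝ) < 1 / 4)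
  simp only [rpow_one, neg_mul] at hGamma
  exact hGamma.const_mul _

lemma integral_rpow_neg_mul_stableHalf {a : ℝ} (ha : -(1 / 2) < a) :
    ∫ t in Ioi 0, t ^ (-a) * stableHalf t = Gamma (2 * a + 1) / Gamma (a + 1) := by
  rw [← integral_comp_rpow_Ioi _ (by norm_num : (-1 : ℝ) ≠ 0),
    setIntegral_congr_fun measurableSet_Ioi fun x hx => stableHalf_moment_integrand_comp_inv a hx,
    integral_const_mul, integral_rpow_mul_exp_neg_mul_Ioi (by linarith) (by norm_num)]
  have hdup :
      Gamma (a + 1 / 2) * Gamma (a + 1) = Gamma (2 * a + 1) * (2 ^ (2 * a))⁻¹ * √π := by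
    rw [← rpow_neg zero_le_two]
    convert Gamma_mul_Gamma_add_half (a + 1 / 2) using 3 <;> ring_nf
  have hfour : (1 / (1 / 4) : ℝ) ^ (a + 1 / 2) = 2 * 2 ^ (2 * a) := by
    rw [show (1 / (1 / 4) : ℝ) = 2 ^ (2 : ℕ) by norm_num, ← rpow_natCast_mul zero_le_two,
      show ((2 : ℕ) : ℝ) * (a + 1 / 2) = 1 + 2 * a by push_cast; ring, rpow_add two_pos,
      rpow_one]
  have hG : 0 < Gamma (a + 1) := Gamma_pos_of_pos (by linarith)
  have : (0 : ℝ) < 2 ^ (2 * a) := by positivity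
  have hπ : 0 < √π := sqrt_pos.mpr pi_pos
  rw [hfour, eq_div_iff hG.ne', mul_assoc, mul_assoc, hdup]
  field_simp

lemma integral_rpow_neg_half_nat_mul_stableHalf (l : ℕ) :
    ∫ t in Ioi 0, t ^ (-(l / 2 : ℝ)) * stableHalf t = l ! / Gamma (l / 2 + 1) := by
  rw [integral_rpow_neg_mul_stableHalf ((neg_lt_zero.2 one_half_pos).trans_le (by positivity)),
    mul_div_cancel₀ _ two_ne_zero, Gamma_nat_eq_factorial]

lemma integral_exp_neg_mul_rpow_neg_half_mul_stableHalf (c : ℝ) :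
    ∫ t in Ioi 0, exp (-(c * t ^ (-(1 / 2) : ℝ))) * stableHalf t
      = ∑' l : ℕ, (-c) ^ l / Gamma (l / 2 + 1) := by
  have hexp : ∀ t ∈ Ioi (0 : ℝ), exp (-(c * t ^ (-(1 / 2) : ℝ))) * stableHalf t
      = ∑' l : ℕ, (-c) ^ l / l ! * (t ^ (-(l / 2 : ℝ)) * stableHalf t) := fun t ht => by
    rw [exp_eq_exp_ℝ, ← (NormedSpace.expSeries_div_hasSum_exp _).tsum_eq, ← tsum_mul_right]
    refine tsum_congr fun l => ?_
    rw [neg_mul_eq_neg_mul, mul_pow, ← rpow_natCast (t ^ _), ← rpow_mul ht.out.le]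
    ring_nf
  rw [setIntegral_congr_fun measurableSet_Ioi hexp, integral_tsum_mul_of_nonneg]
  · refine tsum_congr fun l => ?_
    rw [integral_rpow_neg_half_nat_mul_stableHalf]
    field_simp
  · exact fun l => (ae_restrict_iff' measurableSet_Ioi).2 <| .of_forall fun t ht =>
      mul_nonneg (rpow_nonneg ht.out.le _) (stableHalf_nonneg ht.out.le)
  · exact fun l => integrableOn_rpow_neg_mul_stableHalf
      ((neg_lt_zero.2 one_half_pos).trans_le (by positivity))
  · refine (summable_pow_div_Gamma_half_add_one (abs_nonneg c)).congr fun l => ?_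
    rw [integral_rpow_neg_half_nat_mul_stableHalf, abs_div, abs_pow, abs_neg, Nat.abs_cast]
    field_simp

lemma integral_mul_exp_mul_stableHalf_eq_tsum {n : ℕ} (hn : 1 ≤ n) (y : ℝ) {s : ℝ}
    (hs : 0 < s) :
    ∫ t in Ioi 0, s ^ (n - 1) * exp (-s - y⁻¹ * s ^ ((1 : ℝ) / 2) * t ^ (-(1 / 2) : ℝ)) *
        stableHalf t
      = ∑' l : ℕ, (-1 / y) ^ l / Gamma (l / 2 + 1) *
          (exp (-s) * s ^ ((n : ℝ) + l / 2 - 1)) := by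
  calc _ = s ^ (n - 1) * exp (-s) * ∫ t in Ioi 0,
          exp (-(y⁻¹ * s ^ ((1 : ℝ) / 2) * t ^ (-(1 / 2) : ℝ))) * stableHalf t := by
        rw [← integral_const_mul]
        refine setIntegral_congr_fun measurableSet_Ioi fun t _ => ?_
        rw [sub_eq_add_neg, exp_add]
        ring
    _ = _ := by
        rw [integral_exp_neg_mul_rpow_neg_half_mul_stableHalf, ← tsum_mul_left]
        refine tsum_congr fun l => ?_
        rw [neg_mul_eq_neg_mul, mul_pow, ← rpow_natCast (s ^ _), ← rpow_mul hs.le,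
          show (n : ℝ) + l / 2 - 1 = (n - 1 : ℕ) + 1 / 2 * l by
            push_cast [Nat.cast_sub hn]; ring,
          rpow_add hs, rpow_natCast]
        ring

/-- Let n ≥ 1 be an integer and let y > 1.  Then
∑_{l=0}^∞ (Γ(n+l/2)/Γ(1+l/2)) (−1/y)^l
  = ∫₀^∞ ∫₀^∞ s^{n−1} e^{−s − y^{−1} s^{1/2} t^{−1/2}} f_{1/2}(t) dt ds,
and the series on the left converges absolutely. -/
theorem stmt12 (n : ℕ) (hn : 1 ≤ n) (y : ℝ) (hy : 1 < y) :
    Summable (fun l : ℕ =>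
      |Real.Gamma ((n : ℝ) + l / 2) / Real.Gamma (1 + l / 2) * (-1 / y) ^ l|) ∧
    ∑' l : ℕ, Real.Gamma ((n : ℝ) + l / 2) / Real.Gamma (1 + l / 2) * (-1 / y) ^ l
      = ∫ s in Ioi (0:ℝ), ∫ t in Ioi (0:ℝ),
          s ^ (n - 1) *
            Real.exp (-s - y⁻¹ * s ^ ((1:ℝ) / 2) * t ^ (-(1 / 2) : ℝ)) * stableHalf t := by
  have hy0 : 0 < y := one_pos.trans hy
  have hr : |-1 / y| = 1 / y := by rw [neg_div, abs_neg, abs_of_pos (by positivity)]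
  have habs : ∀ l : ℕ, |Gamma (n + l / 2) / Gamma (1 + l / 2) * (-1 / y) ^ l|
      = Gamma (n + l / 2) / Gamma (1 + l / 2) * (1 / y) ^ l := fun l => by
    rw [abs_mul, abs_pow, hr, abs_of_pos (by positivity)]
  have hsum := summable_Gamma_div_Gamma_mul_pow hn (by positivity) ((div_lt_one hy0).2 hy)
  refine ⟨by simpa only [habs] using hsum, ?_⟩
  rw [setIntegral_congr_fun measurableSet_Ioi
    fun s hs => integral_mul_exp_mul_stableHalf_eq_tsum hn y hs, integral_tsum_mul_of_nonneg]
  · refine tsum_congr fun l => ?_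
    rw [← Gamma_eq_integral (by positivity), add_comm (1 : ℝ)]
    ring
  · exact fun l => (ae_restrict_iff' measurableSet_Ioi).2 <| .of_forall fun s hs => by
      have := hs.out; positivity
  · exact fun l => GammaIntegral_convergent (by positivity)
  · refine hsum.congr fun l => ?_
    rw [← Gamma_eq_integral (by positivity), abs_div, abs_pow, hr, abs_of_pos (by positivity),
      add_comm (1 : ℝ)]
    ring
end
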